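/- Let η ∈ (0, 1) and define the real sequence β_t = (−1)^t · (∏_{k=0}^{t−1} (1/2 − k)/(t − k)) · (1 − η)^t for t ∈ ℕ (so β_0 = 1, the empty product being 1). Then for every ω ∈ ℝ the series B(ω) = Σ_{t=0}^∞ β_t e^{iωt} converges absolutely, its square satisfies B(ω)² = 1 − (1 − η)e^{iω}, and consequently |B(ω)|² = |1 − η − e^{iω}|. -/

import Mathlib

/-!
With `z = -(1 - η) e^{iω}` the terms are `β_t e^{iωt} = (1/2 choose t) z^t` and `|z| = 1 - η < 1`,
so the series is the binomial series of `(1 + z)^{1/2}`: it converges absolutely and its square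
is `1 + z`. Since `|e^{iω}| = 1`, conjugating gives `|1 - (1 - η) e^{iω}| = |1 - η - e^{iω}|`.
-/

open Real

/-- The optimal noise coefficients for mean estimation:
`β_t = (-1)^t (1/2 choose t) (1-η)^t`, where the generalized binomial coefficient
is given by the product formula `(1/2 choose t) = ∏_{k=0}^{t-1} (1/2 - k)/(t - k)`. -/
noncomputable def betaOpt (η : ℝ) (t : ℕ) : ℝ :=
  (-1 : ℝ) ^ t * (∏ k ∈ Finset.range t, ((1 / 2 : ℝ) - k) / ((t : ℝ) - k)) * (1 - η) ^ t

open Finset Polynomial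

theorem Ring.choose_eq_prod_div {K : Type*} [Field K] [CharZero K] (r : K) (t : ℕ) :
    Ring.choose r t = ∏ k ∈ range t, (r - k) / (t - k) := by
  have hpoch (x : K) : (descPochhammer ℤ t).smeval x = ∏ k ∈ range t, (x - k) := by
    rw [← aeval_eq_smeval, aeval_def, ← eval_map, descPochhammer_map,
      descPochhammer_eval_eq_prod_range]
  have hfact : ∏ k ∈ range t, ((t : K) - k) = t.factorial := by
    rw [← hpoch, descPochhammer_smeval_eq_descFactorial, Nat.descFactorial_self]
  rw [prod_div_distrib, hfact, Ring.choose_eq_smul, hpoch, smul_eq_mul, inv_mul_eq_div]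

namespace Complex

theorem binomialSeries_apply_const (a z : ℂ) (n : ℕ) :
    binomialSeries ℂ a n (fun _ => z) = Ring.choose a n * z ^ n := by
  simp only [binomialSeries_apply, List.ofFn_const, List.prod_replicate, smul_eq_mul]

theorem mem_eball_one_of_norm_lt_one {z : ℂ} (hz : ‖z‖ < 1) :
    z ∈ Metric.eball (0 : ℂ) 1 := by
  rw [← ENNReal.ofReal_one, Metric.eball_ofReal]
  simpa using hz

theorem hasSum_choose_mul_pow_one_add_cpow (a : ℂ) {z : ℂ} (hz : ‖z‖ < 1) :
    HasSum (fun n => Ring.choose a n * z ^ n) ((1 + z) ^ a) := by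
  simpa only [binomialSeries_apply_const, zero_add] using
    one_add_cpow_hasFPowerSeriesOnBall_zero.hasSum (mem_eball_one_of_norm_lt_one hz)

theorem summable_norm_choose_mul_pow (a : ℂ) {z : ℂ} (hz : ‖z‖ < 1) :
    Summable fun n => ‖Ring.choose a n * z ^ n‖ := by
  simpa only [binomialSeries_apply_const] using (binomialSeries ℂ a).summable_norm_apply
    (Metric.eball_subset_eball binomialSeries_radius_ge_one (mem_eball_one_of_norm_lt_one hz))

theorem norm_one_sub_ofReal_mul (c : ℝ) {e : ℂ} (he : ‖e‖ = 1) :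
    ‖1 - c * e‖ = ‖(c : ℂ) - e‖ := by
  have hconj : e * (starRingEnd ℂ) e = 1 := by
    rw [mul_conj, normSq_eq_norm_sq, he]
    norm_num
  calc ‖1 - c * e‖ = ‖e * (starRingEnd ℂ) (1 - c * e)‖ := by
        rw [norm_mul, he, one_mul, norm_conj]
    _ = ‖e - c‖ := by
        congr 1
        simp only [map_sub, map_one, map_mul, conj_ofReal]
        linear_combination (-(c : ℂ)) * hconj
    _ = ‖(c : ℂ) - e‖ := norm_sub_rev _ _

end Complex

open Complex in
theorem betaOpt_mul_exp (η ω : ℝ) (t : ℕ) :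
    (betaOpt η t : ℂ) * exp (I * ω * t) =
      Ring.choose (1 / 2 : ℂ) t * (-(((1 - η : ℝ) : ℂ) * exp (I * ω))) ^ t := by
  have hexp : exp (I * ω * t) = exp (I * ω) ^ t := by
    rw [← Complex.exp_nat_mul, mul_comm]
  rw [betaOpt, Ring.choose_eq_prod_div, hexp, neg_pow (_ * _), mul_pow]
  push_cast
  ring

theorem betaOpt_fourier (η : ℝ) (hη0 : 0 < η) (hη1 : η < 1) :
    ∀ ω : ℝ,
      (Summable fun t : ℕ =>
        ‖(betaOpt η t : ℂ) * Complex.exp (Complex.I * (ω : ℂ) * (t : ℂ))‖) ∧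
      (∑' t : ℕ, (betaOpt η t : ℂ) * Complex.exp (Complex.I * (ω : ℂ) * (t : ℂ))) ^ 2
        = 1 - ((1 - η : ℝ) : ℂ) * Complex.exp (Complex.I * (ω : ℂ)) ∧
      ‖∑' t : ℕ, (betaOpt η t : ℂ) * Complex.exp (Complex.I * (ω : ℂ) * (t : ℂ))‖ ^ 2
        = ‖(1 : ℂ) - (η : ℂ) - Complex.exp (Complex.I * (ω : ℂ))‖ := by
  intro ω
  have he : ‖Complex.exp (Complex.I * ω)‖ = 1 := by
    rw [mul_comm, Complex.norm_exp_ofReal_mul_I]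
  set z : ℂ := -(((1 - η : ℝ) : ℂ) * Complex.exp (Complex.I * ω))
  have hz : ‖z‖ < 1 := by
    rw [norm_neg, norm_mul, he, mul_one, Complex.norm_real, Real.norm_of_nonneg (by linarith)]
    linarith
  have hB : ∑' t : ℕ, (betaOpt η t : ℂ) * Complex.exp (Complex.I * ω * t) =
      (1 + z) ^ (1 / 2 : ℂ) := by
    simp only [betaOpt_mul_exp]
    exact (Complex.hasSum_choose_mul_pow_one_add_cpow _ hz).tsum_eq
  have hB_sq : ((1 + z) ^ (1 / 2 : ℂ)) ^ 2 = 1 + z := by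
    simpa only [one_div] using Complex.cpow_ofNat_inv_pow (1 + z) 2
  refine ⟨?_, ?_, ?_⟩
  · simp only [betaOpt_mul_exp]
    exact Complex.summable_norm_choose_mul_pow _ hz
  · rw [hB, hB_sq, ← sub_eq_add_neg]
  · rw [← norm_pow, hB, hB_sq, ← sub_eq_add_neg, Complex.norm_one_sub_ofReal_mul _ he]
    push_cast
    ring_nf
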